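/- The Chebyshev coefficients of f(x) = (1-x²)^{-1/4} are given by: c_n = 0 if n is odd, and c_n = 2·Γ(n/2 + 1/4)/(√π·Γ(n/2 + 3/4)) if n is even, where c_n = (2/π)∫_{-1}^{1} (1-x²)^{-3/4}·T_n(x) dx. -/

import Mathlib

/-!
Put `I_k = ∫_{-1}^{1} (1 - x²)^a T_k(x) dx` with `-1 < a`. Odd moments vanish because `T_k` has
the parity of `k`. Differentiating `(1 - x²)^(a+1) T_k` with `(1 - x²) T_k' = k (T_{k-1} - x T_k)`
and `2 x T_k = T_{k+1} + T_{k-1}`, and integrating over `[-1, 1]` where the boundary terms vanish,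
gives `(k/2 + a + 1) I_{k+1} = (k/2 - a - 1) I_{k-1}`. The substitution `u = x²` turns `I_0` into
the Beta integral `B(1/2, a + 1)`, and `Γ(s + 1) = s Γ(s)` solves the recurrence. For `a = -3/4`
the constant `Γ(a + 1) / Γ(-a - 1/2)` is `1`.
-/

open Polynomial Polynomial.Chebyshev MeasureTheory Set intervalIntegral Real

theorem integral_rpow_mul_one_sub_rpow {s t : ℝ} (hs : 0 < s) (ht : 0 < t) :
    ∫ x in (0 : ℝ)..1, x ^ (s - 1) * (1 - x) ^ (t - 1) = Gamma s * Gamma t / Gamma (s + t) := by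
  have hB := Complex.betaIntegral_eq_Gamma_mul_div s t (by simpa) (by simpa)
  rw [Complex.betaIntegral, ← Complex.ofReal_add, Complex.Gamma_ofReal, Complex.Gamma_ofReal,
    Complex.Gamma_ofReal] at hB
  rw [← Complex.ofReal_inj, ← intervalIntegral.integral_ofReal]
  push_cast
  rw [← hB]
  refine intervalIntegral.integral_congr fun x hx => ?_
  rw [uIcc_of_le zero_le_one] at hx
  rw [Complex.ofReal_cpow hx.1, Complex.ofReal_cpow (sub_nonneg.2 hx.2)]
  push_cast
  rfl

theorem intervalIntegrable_one_sub_sq_rpow {a : ℝ} (ha : -1 < a) :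
    IntervalIntegrable (fun x : ℝ => (1 - x ^ 2) ^ a) volume (-1) 1 := by
  have h01 : IntervalIntegrable (fun x : ℝ => (1 - x ^ 2) ^ a) volume 0 1 := by
    have hsing : IntervalIntegrable (fun x : ℝ => (1 - x) ^ a) volume 0 1 := by
      simpa using ((intervalIntegrable_rpow' ha).comp_sub_left 1 :
        IntervalIntegrable _ volume (1 - 1) (1 - 0))
    have hreg : ContinuousOn (fun x : ℝ => (1 + x) ^ a) (uIcc 0 1) := fun x hx =>
      ((by fun_prop : ContinuousAt (fun x : ℝ => 1 + x) x).rpow_const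
        (Or.inl (by rw [uIcc_of_le zero_le_one] at hx; linarith [hx.1]))).continuousWithinAt
    refine (hsing.mul_continuousOn hreg).congr fun x hx => ?_
    rw [uIoc_of_le zero_le_one] at hx
    rw [← mul_rpow (by linarith [hx.2]) (by linarith [hx.1])]
    ring_nf
  have h := (IntervalIntegrable.iff_comp_neg).mp h01
  simp only [neg_sq, neg_zero] at h
  exact h.symm.trans h01

theorem integral_rpow_neg_half_mul_one_sub_rpow (a : ℝ) :
    ∫ u in (0 : ℝ)..1, u ^ (-(1 / 2) : ℝ) * (1 - u) ^ a =
      2 * ∫ x in (0 : ℝ)..1, (1 - x ^ 2) ^ a := by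
  have hsq : (fun x : ℝ => x ^ 2) '' Ioo 0 1 = Ioo 0 1 := by
    refine Subset.antisymm ?_ fun u hu => ⟨√u, ⟨sqrt_pos.2 hu.1, ?_⟩, sq_sqrt hu.1.le⟩
    · rintro _ ⟨x, hx, rfl⟩
      exact ⟨by nlinarith [hx.1], by nlinarith [hx.1, hx.2]⟩
    · rw [sqrt_lt' one_pos]
      linarith [hu.2]
  have hderiv : ∀ x ∈ Ioo (0 : ℝ) 1, HasDerivWithinAt (fun x : ℝ => x ^ 2) (2 * x) (Ioo 0 1) x :=
    fun x _ => by simpa using (hasDerivAt_pow 2 x).hasDerivWithinAt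
  have hinj : InjOn (fun x : ℝ => x ^ 2) (Ioo 0 1) := fun x hx y hy hxy =>
    (pow_left_inj₀ hx.1.le hy.1.le two_ne_zero).1 hxy
  have hcov := integral_image_eq_integral_abs_deriv_smul measurableSet_Ioo hderiv hinj
    (fun u => u ^ (-(1 / 2) : ℝ) * (1 - u) ^ a)
  rw [hsq] at hcov
  rw [integral_of_le zero_le_one, integral_of_le zero_le_one, ← restrict_Ioo_eq_restrict_Ioc,
    hcov, ← MeasureTheory.integral_const_mul]
  refine setIntegral_congr_fun measurableSet_Ioo fun x hx => ?_
  have hx0 := hx.1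
  rw [smul_eq_mul, abs_of_pos (by positivity), ← rpow_natCast, ← rpow_mul hx0.le, rpow_natCast]
  norm_num [rpow_neg_one]
  field_simp

theorem integral_one_sub_sq_rpow {a : ℝ} (ha : -1 < a) :
    ∫ x in (-1 : ℝ)..1, (1 - x ^ 2) ^ a = √π * Gamma (a + 1) / Gamma (a + 3 / 2) := by
  have hint := intervalIntegrable_one_sub_sq_rpow ha
  have hsymm : ∫ x in (-1 : ℝ)..0, (1 - x ^ 2) ^ a = ∫ x in (0 : ℝ)..1, (1 - x ^ 2) ^ a := by
    have h := (integral_comp_neg (a := 0) (b := 1) fun x : ℝ => (1 - x ^ 2) ^ a).symm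
    simpa only [neg_sq, neg_zero] using h
  have hbeta := integral_rpow_mul_one_sub_rpow one_half_pos (neg_lt_iff_pos_add.1 ha)
  rw [show (1 / 2 : ℝ) - 1 = -(1 / 2) by norm_num, add_sub_cancel_right,
    integral_rpow_neg_half_mul_one_sub_rpow, Gamma_one_half_eq] at hbeta
  have h0 : (0 : ℝ) ∈ uIcc (-1) 1 := by simp
  rw [← integral_add_adjacent_intervals (hint.mono_set (uIcc_subset_uIcc_left h0))
    (hint.mono_set (uIcc_subset_uIcc_right h0)), hsymm, ← two_mul, hbeta]
  congr 2
  ring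

theorem hasDerivAt_one_sub_sq_rpow_add_one_mul_T (a : ℝ) (k : ℤ) {x : ℝ}
    (hx : x ∈ Ioo (-1 : ℝ) 1) :
    HasDerivAt (fun y => (1 - y ^ 2) ^ (a + 1) * (T ℝ k).eval y)
      (((k : ℝ) / 2 - a - 1) * ((1 - x ^ 2) ^ a * (T ℝ (k - 1)).eval x)
        - ((k : ℝ) / 2 + a + 1) * ((1 - x ^ 2) ^ a * (T ℝ (k + 1)).eval x)) x := by
  have hpos : 0 < 1 - x ^ 2 := by nlinarith [hx.1, hx.2]
  have hbase : HasDerivAt (fun y : ℝ => 1 - y ^ 2) (-(2 * x)) x := by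
    simpa using (hasDerivAt_pow 2 x).const_sub 1
  refine ((hbase.rpow_const (Or.inl hpos.ne')).mul
    (Polynomial.hasDerivAt (T ℝ k) x)).congr_deriv ?_
  have hderiv := congr_arg (eval x) (one_sub_X_sq_mul_derivative_T_eq_poly_in_T (R := ℝ) (k - 1))
  have hrec := congr_arg (eval x) (T_add_one ℝ k)
  rw [sub_add_cancel] at hderiv
  simp only [eval_mul, eval_sub, eval_one, eval_pow, eval_X, eval_intCast, eval_ofNat,
    Int.cast_sub, Int.cast_one, sub_add_cancel] at hderiv hrec
  rw [add_sub_cancel_right, rpow_add_one hpos.ne']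
  linear_combination (1 - x ^ 2) ^ a * hderiv + (1 - x ^ 2) ^ a * ((k : ℝ) / 2 + a + 1) * hrec

noncomputable def chebyshevMoment (a : ℝ) (k : ℤ) : ℝ :=
  ∫ x in (-1 : ℝ)..1, (1 - x ^ 2) ^ a * (T ℝ k).eval x

theorem chebyshevMoment_of_odd (a : ℝ) {k : ℤ} (hk : Odd k) : chebyshevMoment a k = 0 := by
  have h := integral_comp_neg (a := -1) (b := 1) fun x => (1 - x ^ 2) ^ a * (T ℝ k).eval x
  simp only [neg_sq, T_eval_neg, Int.negOnePow_odd _ hk, Units.val_neg, Units.val_one,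
    Int.cast_neg, Int.cast_one, neg_one_mul, mul_neg, intervalIntegral.integral_neg, neg_neg] at h
  rw [chebyshevMoment]
  linarith

theorem chebyshevMoment_zero {a : ℝ} (ha : -1 < a) :
    chebyshevMoment a 0 = √π * Gamma (a + 1) / Gamma (a + 3 / 2) := by
  simpa [chebyshevMoment] using integral_one_sub_sq_rpow ha

theorem chebyshevMoment_recurrence {a : ℝ} (ha : -1 < a) (k : ℤ) :
    ((k : ℝ) / 2 + a + 1) * chebyshevMoment a (k + 1) =
      ((k : ℝ) / 2 - a - 1) * chebyshevMoment a (k - 1) := by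
  have hint (m : ℤ) :
      IntervalIntegrable (fun x => (1 - x ^ 2) ^ a * (T ℝ m).eval x) volume (-1) 1 :=
    (intervalIntegrable_one_sub_sq_rpow ha).mul_continuousOn (T ℝ m).continuousOn
  have hcont : ContinuousOn (fun y : ℝ => (1 - y ^ 2) ^ (a + 1) * (T ℝ k).eval y) (Icc (-1) 1) :=
    ((Continuous.rpow_const (by fun_prop) fun _ => Or.inr (by linarith)).mul
      (T ℝ k).continuous).continuousOn
  have hftc := integral_eq_sub_of_hasDeriv_right_of_le (neg_le_self zero_le_one) hcont
    (fun x hx => (hasDerivAt_one_sub_sq_rpow_add_one_mul_T a k hx).hasDerivWithinAt)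
    (((hint _).const_mul _).sub ((hint _).const_mul _))
  have hvanish : (1 - (1 : ℝ) ^ 2) ^ (a + 1) = 0 ∧ (1 - (-1 : ℝ) ^ 2) ^ (a + 1) = 0 := by
    norm_num [zero_rpow (by linarith : a + 1 ≠ 0)]
  rw [integral_sub ((hint _).const_mul _) ((hint _).const_mul _),
    intervalIntegral.integral_const_mul, intervalIntegral.integral_const_mul, hvanish.1,
    hvanish.2, zero_mul, zero_mul, sub_zero] at hftc
  rw [chebyshevMoment, chebyshevMoment]
  linarith

theorem chebyshevMoment_two_mul {a : ℝ} (ha : -1 < a) (ha' : a < -1 / 2) (m : ℕ) :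
    chebyshevMoment a (2 * m) = √π * Gamma (a + 1) / Gamma (-a - 1 / 2) *
      (Gamma (m - a - 1 / 2) / Gamma (m + a + 3 / 2)) := by
  induction m with
  | zero =>
    have hΓ : Gamma (-a - 1 / 2) ≠ 0 := (Gamma_pos_of_pos (by linarith)).ne'
    push_cast
    rw [chebyshevMoment_zero ha, zero_sub, zero_add]
    exact (div_mul_div_cancel₀ hΓ).symm
  | succ m ih =>
    have hx : 0 < (m : ℝ) - a - 1 / 2 := by linarith [(Nat.cast_nonneg m : (0 : ℝ) ≤ m)]
    have hy : 0 < (m : ℝ) + a + 3 / 2 := by linarith [(Nat.cast_nonneg m : (0 : ℝ) ≤ m)]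
    have hrec := chebyshevMoment_recurrence ha (2 * m + 1)
    rw [add_sub_cancel_right, show 2 * (m : ℤ) + 1 + 1 = 2 * (m + 1) by ring, ih] at hrec
    push_cast at hrec ⊢
    rw [show (2 * m + 1 : ℝ) / 2 + a + 1 = m + a + 3 / 2 by ring,
      show (2 * m + 1 : ℝ) / 2 - a - 1 = m - a - 1 / 2 by ring, mul_comm] at hrec
    rw [eq_div_of_mul_eq hy.ne' hrec, show (m + 1 : ℝ) - a - 1 / 2 = (m - a - 1 / 2) + 1 by ring,
      show (m + 1 : ℝ) + a + 3 / 2 = (m + a + 3 / 2) + 1 by ring, Gamma_add_one hx.ne',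
      Gamma_add_one hy.ne', mul_div_mul_comm]
    ring

theorem chebyshev_coeff_quarter_pow_closed_form (n : ℕ) :
    (2 / Real.pi) * ∫ x in (-1 : ℝ)..1, (1 - x ^ 2) ^ (-(3 / 4 : ℝ)) * (T ℝ n).eval x =
      if Odd n then 0
      else 2 * Real.Gamma ((n : ℝ) / 2 + 1 / 4) /
          (Real.sqrt Real.pi * Real.Gamma ((n : ℝ) / 2 + 3 / 4)) := by
  change 2 / π * chebyshevMoment (-(3 / 4)) n = _
  obtain ⟨m, rfl⟩ | hodd := n.even_or_odd
  · have hΓ : Gamma (1 / 4) ≠ 0 := (Gamma_pos_of_pos (by norm_num)).ne'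
    have hπ : 2 / π * √π = 2 / √π := by
      field_simp
      simp [pi_pos.le]
    rw [if_neg (Nat.not_odd_iff_even.2 (Even.add_self m)), ← two_mul, Nat.cast_mul, Nat.cast_two,
      chebyshevMoment_two_mul (by norm_num) (by norm_num)]
    push_cast
    rw [show (2 * m : ℝ) / 2 = m by ring, show (m : ℝ) - -(3 / 4) - 1 / 2 = m + 1 / 4 by ring,
      show (m : ℝ) + -(3 / 4) + 3 / 2 = m + 3 / 4 by ring,
      show -(-(3 / 4) : ℝ) - 1 / 2 = 1 / 4 by ring, show (-(3 / 4) : ℝ) + 1 = 1 / 4 by ring,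
      mul_div_cancel_right₀ _ hΓ, ← mul_assoc, hπ, div_mul_div_comm]
  · rw [if_pos hodd, chebyshevMoment_of_odd _ (by exact_mod_cast hodd.natCast), mul_zero]
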